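/- arXiv:cs/0609161 — 2 statements merged into one kernel-verified Lean document; each statement's English description precedes it below -/
import Mathlib

section
/- Let m ≥ 2 and let i satisfy c_m − g_m < i ≤ 2c_m − g_m and q ∤ (i + g_m). Then ν^m_i = 2 + 2·(λ^m)^{-1}(⌊i + g_m − c_m − 1⌋_{Λ^m}), i.e., ν^m_i = 2·#{α ∈ Λ^m : α < λ^m_i − c_m}. -/
/-- The Garcia–Stichtenoth tower of Weierstrass semigroups:
`Λ¹ = ℕ₀`, `Λᵐ = q·Λ^{m-1} ∪ {i : i ≥ qᵐ - q^⌊(m+1)/2⌋}` for `m ≥ 2`. -/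
def GSsemigroup (q : ℕ) : ℕ → Set ℕ
  | 0 => Set.univ
  | 1 => Set.univ
  | (m + 2) => (fun x => q * x) '' GSsemigroup q (m + 1) ∪
      {i : ℕ | q ^ (m + 2) - q ^ ((m + 3) / 2) ≤ i}

/-- `c_m = q^m - q^⌊(m+1)/2⌋`, the conductor of `Λ^m`. -/
def gsC (q m : ℕ) : ℕ := q ^ m - q ^ ((m + 1) / 2)

/-- `g_m = (q^⌊(m+1)/2⌋ - 1)(q^⌈(m-1)/2⌉ - 1)`, the genus of `Λ^m`
(note `⌈(m-1)/2⌉ = ⌊m/2⌋` for `m ≥ 1`). -/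
def gsG (q m : ℕ) : ℕ := (q ^ ((m + 1) / 2) - 1) * (q ^ (m / 2) - 1)

/-- `A_i = {j : q^{2i-1} - q^i ≤ j ≤ q^{2i-1} - q^{i-1} - 1}`. -/
def gsA (q i : ℕ) : Set ℕ :=
  {j : ℕ | q ^ (2 * i - 1) - q ^ i ≤ j ∧ j ≤ q ^ (2 * i - 1) - q ^ (i - 1) - 1}

/-- The enumeration `λ` of `Λ^m`: the increasing bijection `ℕ₀ → Λ^m`. -/
noncomputable def gsEnum (q m : ℕ) : ℕ → ℕ := Nat.nth (fun n => n ∈ GSsemigroup q m)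

/-- `ν_i = #{j : λ_i - λ_j ∈ Λ^m}` (the subtraction being in `ℤ`,
i.e. `∃ a ∈ Λ^m, λ_j + a = λ_i`). -/
noncomputable def gsNu (q m i : ℕ) : ℕ :=
  Set.ncard {j : ℕ | ∃ a ∈ GSsemigroup q m, gsEnum q m j + a = gsEnum q m i}

/-- The order (Feng–Rao) bound `δ_i = min {ν_j : j > i}`. -/
noncomputable def gsDelta (q m i : ℕ) : ℕ := sInf (gsNu q m '' {j : ℕ | i < j})

/-- The semigroup floor `⌊k⌋_{Λ^m}`: the largest element of `Λ^m` not exceeding `k`. -/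
noncomputable def gsFloor (q m k : ℕ) : ℕ := sSup {x ∈ GSsemigroup q m | x ≤ k}

/-- `λ⁻¹(x)` for `x ∈ Λ^m`: the number of elements of `Λ^m` below `x`. -/
noncomputable def gsLinv (q m x : ℕ) : ℕ := Set.ncard {y ∈ GSsemigroup q m | y < x}

/-!
Below the conductor `c_m`, `Λ^m` is `q` times the part of `Λ^{m-1}` below `c_m / q ≥ c_{m-1}`, so
induction on `m` gives `#{x ∈ Λ^m | x < c_m} + g_m = c_m`, hence `λ_i = i + g_m` beyond the
conductor. Let `L = λ_i`, with `c_m < L < 2 c_m` and `q ∤ L`. In a decomposition `L = b + a`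
inside `Λ^m` exactly one summand is below `c_m` (two small ones are multiples of `q`, two large
ones add up to at least `2 c_m`), and that summand is even below `L - c_m`; conversely every
`α ∈ Λ^m` below `L - c_m` pairs with `L - α > c_m`. So `ν_i = 2 #{α ∈ Λ^m | α < L - c_m}`.
-/

section NatSet

variable {S : Set ℕ} {q c L : ℕ}

theorem Nat.count_eq_ncard (p : ℕ → Prop) [DecidablePred p] (n : ℕ) :
    Nat.count p n = {x | p x ∧ x < n}.ncard := by
  rw [Nat.count_eq_card_filter_range, ← Set.ncard_coe_finset]
  congr 1
  ext x
  simp [and_comm]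

theorem ncard_lt_eq_add_of_forall_le_mem (hS : ∀ n, c ≤ n → n ∈ S) {N : ℕ} (hN : c ≤ N) :
    {x ∈ S | x < N}.ncard = {x ∈ S | x < c}.ncard + (N - c) := by
  have hsplit : {x ∈ S | x < N} = {x ∈ S | x < c} ∪ Set.Ico c N := by
    ext x
    simp only [Set.mem_union, Set.mem_Ico, Set.mem_ofPred_eq]
    constructor
    · rintro ⟨hx, hxN⟩
      by_cases hxc : x < c
      · exact .inl ⟨hx, hxc⟩
      · exact .inr ⟨by omega, hxN⟩
    · rintro (⟨hx, hxc⟩ | ⟨hcx, hxN⟩)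
      · exact ⟨hx, by omega⟩
      · exact ⟨hS x hcx, hxN⟩
  have hdisj : Disjoint {x ∈ S | x < c} (Set.Ico c N) :=
    Set.disjoint_left.2 fun x hx hx' => absurd hx'.1 (not_le.2 hx.2)
  rw [hsplit, Set.ncard_union_eq hdisj ((Set.finite_Iio c).subset fun x hx => hx.2),
    Set.ncard_Ico_nat]

theorem Nat.nth_eq_add_of_ncard_add_eq (hS : ∀ n, c ≤ n → n ∈ S) {g : ℕ}
    (hcount : {x ∈ S | x < c}.ncard + g = c) {i : ℕ} (hi : c ≤ i + g) :
    Nat.nth (· ∈ S) i = i + g := by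
  classical
  have hmem : i + g ∈ S := hS _ hi
  have hcount_i : Nat.count (· ∈ S) (i + g) = i := by
    rw [Nat.count_eq_ncard, ncard_lt_eq_add_of_forall_le_mem hS hi]
    omega
  simpa [hcount_i] using Nat.nth_count hmem

theorem Set.Infinite.ncard_setOf_nth (hS : S.Infinite) (P : ℕ → Prop) :
    {j | P (Nat.nth (· ∈ S) j)}.ncard = {b ∈ S | P b}.ncard := by
  rw [← Set.ncard_image_of_injective _ (Nat.nth_injective hS)]
  congr 1
  ext b
  constructor
  · rintro ⟨j, hj, rfl⟩
    exact ⟨Nat.nth_mem_of_infinite hS j, hj⟩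
  · rintro ⟨hb, hPb⟩
    obtain ⟨j, rfl⟩ : b ∈ Set.range (Nat.nth (· ∈ S)) := by
      rwa [Nat.range_nth_of_infinite (p := (· ∈ S)) hS]
    exact ⟨j, hPb, rfl⟩

theorem lt_sub_of_add_eq_of_lt (hsmall : ∀ x ∈ S, x < c → q ∣ x) (hc : q ∣ c) (hL : ¬ q ∣ L)
    {a b : ℕ} (ha : a ∈ S) (hb : b ∈ S) (hab : b + a = L) (hbc : b < c) : b < L - c := by
  have hqb := hsmall b hb hbc
  have hca : c ≤ a := not_lt.1 fun hac => hL (hab ▸ dvd_add hqb (hsmall a ha hac))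
  have hac : a ≠ c := by rintro rfl; exact hL (hab ▸ dvd_add hqb hc)
  omega

theorem ncard_setOf_add_eq (hS : ∀ n, c ≤ n → n ∈ S) (hsmall : ∀ x ∈ S, x < c → q ∣ x)
    (hc : q ∣ c) (hL : ¬ q ∣ L) (hL2 : L < 2 * c) :
    {b ∈ S | ∃ a ∈ S, b + a = L}.ncard = 2 * {a ∈ S | a < L - c}.ncard := by
  set T := {a ∈ S | a < L - c}
  have hT : T.Finite := (Set.finite_Iio (L - c)).subset fun x hx => hx.2
  have hsplit : {b ∈ S | ∃ a ∈ S, b + a = L} = T ∪ (L - ·) '' T := by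
    ext b
    constructor
    · rintro ⟨hb, a, ha, hab⟩
      by_cases hbc : b < c
      · exact .inl ⟨hb, lt_sub_of_add_eq_of_lt hsmall hc hL ha hb hab hbc⟩
      · have hac := lt_sub_of_add_eq_of_lt hsmall hc hL hb ha (by omega) (by omega)
        exact .inr ⟨a, ⟨ha, hac⟩, show L - a = b by omega⟩
    · rintro (⟨hb, hbL⟩ | ⟨a, ⟨ha, haL⟩, rfl⟩)
      · exact ⟨hb, L - b, hS _ (by omega), by omega⟩
      · exact ⟨hS (L - a) (by omega), a, ha, show L - a + a = L by omega⟩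
  have hdisj : Disjoint T ((L - ·) '' T) := by
    rw [Set.disjoint_left]
    rintro _ hb ⟨a, ha, rfl⟩
    have := hb.2
    have := ha.2
    simp only at *
    omega
  have hinj : Set.InjOn (L - ·) T := fun a ha b hb hab => by
    have := ha.2
    have := hb.2
    simp only at hab
    omega
  rw [hsplit, Set.ncard_union_eq hdisj hT (hT.image _), hinj.ncard_image, two_mul]

theorem ncard_lt_succ_eq_one_add_ncard_lt_sSup (h0 : 0 ∈ S) (K : ℕ) :
    {a ∈ S | a < K + 1}.ncard = 1 + {a ∈ S | a < sSup {x ∈ S | x ≤ K}}.ncard := by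
  set F := sSup {x ∈ S | x ≤ K}
  have hbdd : BddAbove {x ∈ S | x ≤ K} := ⟨K, fun x hx => hx.2⟩
  have hF : F ∈ {x ∈ S | x ≤ K} := Nat.sSup_mem ⟨0, ⟨h0, K.zero_le⟩⟩ hbdd
  have hinsert : {a ∈ S | a < K + 1} = insert F {a ∈ S | a < F} := by
    ext a
    simp only [Set.mem_insert_iff, Set.mem_ofPred_eq]
    constructor
    · rintro ⟨ha, haK⟩
      exact (le_csSup hbdd ⟨ha, by omega⟩).eq_or_lt.imp id fun h => ⟨ha, h⟩
    · rintro (rfl | ⟨ha, haF⟩)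
      · exact ⟨hF.1, Nat.lt_succ_of_le hF.2⟩
      · exact ⟨ha, by have := hF.2; omega⟩
  rw [hinsert, Set.ncard_insert_of_notMem (fun h => h.2.false)
    ((Set.finite_Iio F).subset fun x hx => hx.2), add_comm]

end NatSet

section GSsemigroup

variable {q : ℕ}

theorem mem_GSsemigroup_of_gsC_le : ∀ {m n : ℕ}, gsC q m ≤ n → n ∈ GSsemigroup q m
  | 0, n, _ => Set.mem_univ n
  | 1, n, _ => Set.mem_univ n
  | _ + 2, _, h => .inr h

theorem zero_mem_GSsemigroup : ∀ m, 0 ∈ GSsemigroup q m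
  | 0 => Set.mem_univ 0
  | 1 => Set.mem_univ 0
  | k + 2 => .inl ⟨0, zero_mem_GSsemigroup (k + 1), mul_zero q⟩

theorem GSsemigroup_infinite (m : ℕ) : (GSsemigroup q m).Infinite :=
  Set.infinite_of_forall_exists_gt fun n =>
    ⟨n + 1 + gsC q m, mem_GSsemigroup_of_gsC_le (by omega), by omega⟩

theorem exists_mul_eq_of_mem_GSsemigroup_of_lt_gsC {m n : ℕ} (hm : 1 ≤ m)
    (hn : n ∈ GSsemigroup q (m + 1)) (h : n < gsC q (m + 1)) :
    ∃ x ∈ GSsemigroup q m, q * x = n := by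
  obtain ⟨k, rfl⟩ := Nat.exists_eq_add_of_le' hm
  exact hn.resolve_right h.not_ge

theorem mul_mem_GSsemigroup_succ {m x : ℕ} (hm : 1 ≤ m) (hx : x ∈ GSsemigroup q m) :
    q * x ∈ GSsemigroup q (m + 1) := by
  obtain ⟨k, rfl⟩ := Nat.exists_eq_add_of_le' hm
  exact .inl ⟨x, hx, rfl⟩

theorem dvd_of_mem_GSsemigroup_of_lt_gsC {m n : ℕ} (hm : 2 ≤ m) (hn : n ∈ GSsemigroup q m)
    (h : n < gsC q m) : q ∣ n := by
  obtain ⟨k, rfl⟩ := Nat.exists_eq_add_of_le' (show 1 ≤ m by omega)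
  obtain ⟨x, -, rfl⟩ := exists_mul_eq_of_mem_GSsemigroup_of_lt_gsC (by omega) hn h
  exact dvd_mul_right q x

theorem dvd_gsC {m : ℕ} (hm : 1 ≤ m) : q ∣ gsC q m :=
  Nat.dvd_sub (dvd_pow_self q (by omega)) (dvd_pow_self q (by omega))

theorem exists_gsC_succ_eq_mul (hq : 0 < q) (m : ℕ) :
    ∃ d, gsC q (m + 1) = q * d ∧ gsC q m ≤ d ∧ d + gsG q (m + 1) = gsC q (m + 1) + gsG q m := by
  -- `q ^ m = a * b`, and passing from `m` to `m + 1` turns `(a, b)` into `(q * b, a)`.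
  set a := q ^ ((m + 1) / 2)
  set b := q ^ (m / 2)
  have hb : 1 ≤ b := Nat.one_le_pow _ _ hq
  have hba : b ≤ a := Nat.pow_le_pow_right hq (by omega)
  have hab : a ≤ a * b := Nat.le_mul_of_pos_right a hb
  have hC : gsC q m = a * b - a := by
    rw [gsC, ← pow_add, show (m + 1) / 2 + m / 2 = m by omega]
  have hC' : gsC q (m + 1) = q * (a * b - b) := by
    rw [gsC, show (m + 1 + 1) / 2 = m / 2 + 1 by omega, Nat.mul_sub, pow_succ', pow_succ',
      ← pow_add, show (m + 1) / 2 + m / 2 = m by omega]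
  have hG : gsG q m = (a - 1) * (b - 1) := rfl
  have hG' : gsG q (m + 1) = (q * b - 1) * (a - 1) := by
    rw [gsG, show (m + 1 + 1) / 2 = m / 2 + 1 by omega, pow_succ']
  refine ⟨a * b - b, hC', by omega, ?_⟩
  rw [hC', hG, hG']
  have hqb : 1 ≤ q * b := Nat.one_le_iff_ne_zero.2 (by positivity)
  zify [hb, hqb, hab, hab.trans' hba, hb.trans hba]
  ring

theorem gsLinv_gsC_add_gsG (hq : 0 < q) {m : ℕ} (hm : 1 ≤ m) :
    gsLinv q m (gsC q m) + gsG q m = gsC q m := by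
  induction m, hm using Nat.le_induction with
  | base => simp [gsLinv, gsC, gsG]
  | succ m hm ih =>
    obtain ⟨d, hCd, hCle, hG⟩ := exists_gsC_succ_eq_mul hq m
    have himage : {y ∈ GSsemigroup q (m + 1) | y < gsC q (m + 1)} =
        (q * ·) '' {y ∈ GSsemigroup q m | y < d} := by
      ext n
      constructor
      · rintro ⟨hn, hnc⟩
        obtain ⟨x, hx, rfl⟩ := exists_mul_eq_of_mem_GSsemigroup_of_lt_gsC hm hn hnc
        exact ⟨x, ⟨hx, Nat.lt_of_mul_lt_mul_left (hCd ▸ hnc)⟩, rfl⟩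
      · rintro ⟨x, ⟨hx, hxd⟩, rfl⟩
        exact ⟨mul_mem_GSsemigroup_succ hm hx, hCd ▸ Nat.mul_lt_mul_of_pos_left hxd hq⟩
    have hcount : gsLinv q (m + 1) (gsC q (m + 1)) = gsLinv q m d := by
      rw [gsLinv, himage, Set.ncard_image_of_injective _ (mul_right_injective₀ hq.ne'), gsLinv]
    have hextend : gsLinv q m d = gsLinv q m (gsC q m) + (d - gsC q m) :=
      ncard_lt_eq_add_of_forall_le_mem (fun _ => mem_GSsemigroup_of_gsC_le) hCle
    omega

theorem gsEnum_eq_add_gsG (hq : 0 < q) {m i : ℕ} (hm : 1 ≤ m) (hi : gsC q m ≤ i + gsG q m) :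
    gsEnum q m i = i + gsG q m :=
  Nat.nth_eq_add_of_ncard_add_eq (fun _ => mem_GSsemigroup_of_gsC_le) (gsLinv_gsC_add_gsG hq hm) hi

theorem gsNu_eq_ncard (q m i : ℕ) :
    gsNu q m i = {b ∈ GSsemigroup q m | ∃ a ∈ GSsemigroup q m, b + a = gsEnum q m i}.ncard :=
  (GSsemigroup_infinite m).ncard_setOf_nth fun b => ∃ a ∈ GSsemigroup q m, b + a = gsEnum q m i

end GSsemigroup

/-- for `c_m - g_m < i ≤ 2c_m - g_m` with `q ∤ (i + g_m)`,
`ν^m_i = 2 + 2 λ⁻¹(⌊i + g_m - c_m - 1⌋_{Λ^m}) = 2 #{α ∈ Λ^m : α < λ^m_i - c_m}`. -/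
theorem stmt15 (q : ℕ) (hq : 2 ≤ q) (m : ℕ) (hm : 2 ≤ m) (i : ℕ)
    (h1 : gsC q m - gsG q m < i) (h2 : i ≤ 2 * gsC q m - gsG q m)
    (h3 : ¬ q ∣ (i + gsG q m)) :
    gsNu q m i = 2 + 2 * gsLinv q m (gsFloor q m (i + gsG q m - gsC q m - 1)) ∧
    gsNu q m i = 2 * Set.ncard {a ∈ GSsemigroup q m | a < gsEnum q m i - gsC q m} := by
  have hC : gsC q m < i + gsG q m := by omega
  have h2C : i + gsG q m < 2 * gsC q m :=
    (show i + gsG q m ≤ 2 * gsC q m by omega).lt_of_ne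
      fun h => h3 (h ▸ dvd_mul_of_dvd_right (dvd_gsC (by omega)) 2)
  have hEnum : gsEnum q m i = i + gsG q m := gsEnum_eq_add_gsG (by omega) (by omega) hC.le
  have hNu : gsNu q m i = 2 * {a ∈ GSsemigroup q m | a < gsEnum q m i - gsC q m}.ncard := by
    rw [gsNu_eq_ncard, hEnum]
    exact ncard_setOf_add_eq (fun _ => mem_GSsemigroup_of_gsC_le)
      (fun _ => dvd_of_mem_GSsemigroup_of_lt_gsC hm) (dvd_gsC (by omega)) h3 h2C
  refine ⟨?_, hNu⟩
  rw [hNu, hEnum, show i + gsG q m - gsC q m = i + gsG q m - gsC q m - 1 + 1 by omega,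
    ncard_lt_succ_eq_one_add_ncard_lt_sSup (zero_mem_GSsemigroup m), mul_add, mul_one]
  rfl
end

section
/- Let m ≥ 2 and let i satisfy c_m − g_m < i ≤ 2c_m − g_m and q | (i + g_m). Then ν^m_i = ν^{m−1}_{(i+g_m)/q − g_{m−1}}. -/
open Set

def summandsIn (S : Set ℕ) (n : ℕ) : Set ℕ := {x | x ∈ S ∧ ∃ a ∈ S, x + a = n}

lemma ncard_setOf_nth_add_eq_nth {S : Set ℕ} (hS : S.Infinite) (i : ℕ) :
    {j | ∃ a ∈ S, Nat.nth (· ∈ S) j + a = Nat.nth (· ∈ S) i}.ncard =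
      (summandsIn S (Nat.nth (· ∈ S) i)).ncard := by
  rw [← ncard_image_of_injective _ (Nat.nth_injective hS)]
  congr 1
  ext x
  constructor
  · rintro ⟨j, ⟨a, ha, hja⟩, rfl⟩
    exact ⟨Nat.nth_mem_of_infinite hS j, a, ha, hja⟩
  · rintro ⟨hx, hxi⟩
    obtain ⟨j, rfl⟩ : x ∈ range (Nat.nth (· ∈ S)) := by
      rw [Nat.range_nth_of_infinite (p := (· ∈ S)) hS]; exact hx
    exact ⟨j, hxi, rfl⟩

lemma Nat.count_eq_count_add_sub {p : ℕ → Prop} [DecidablePred p] {c n : ℕ}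
    (hp : ∀ k, c ≤ k → p k) (hn : c ≤ n) : Nat.count p n = Nat.count p c + (n - c) := by
  induction n, hn using Nat.le_induction with
  | base => simp
  | succ n hn ih => rw [Nat.count_succ, if_pos (hp n hn), ih]; omega

section Scaling

variable {q d : ℕ} {T : Set ℕ}

lemma mem_of_mul_mem_image_union_Ici (hq : 0 < q) (hT : Ici d ⊆ T) {y : ℕ}
    (hy : q * y ∈ (q * ·) '' T ∪ Ici (q * d)) : y ∈ T := by
  rcases hy with ⟨t, ht, hty⟩ | hy
  · rwa [← Nat.eq_of_mul_eq_mul_left hq hty]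
  · exact hT (Nat.le_of_mul_le_mul_left hy hq)

lemma lt_of_mem_image_union_Ici_of_not_dvd {x : ℕ} (hx : x ∈ (q * ·) '' T ∪ Ici (q * d))
    (hqx : ¬ q ∣ x) : q * d < x := by
  rcases hx with ⟨t, -, rfl⟩ | hx
  · exact absurd (dvd_mul_right q t) hqx
  · exact lt_of_le_of_ne hx (fun h => hqx (h ▸ dvd_mul_right q d))

/-- A multiple `q * n ≤ 2 q d` cannot be split into two non-multiples of `q`, since those all
exceed `q * d`; so every splitting is `q` times a splitting of `n`. -/
lemma summandsIn_image_union_Ici (hq : 0 < q) (hT : Ici d ⊆ T) {n : ℕ} (hn : n ≤ 2 * d) :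
    summandsIn ((q * ·) '' T ∪ Ici (q * d)) (q * n) = (q * ·) '' summandsIn T n := by
  ext x
  constructor
  · rintro ⟨hx, a, ha, hxa⟩
    have hqx : q ∣ x := by
      by_contra hqx
      have hqa : ¬ q ∣ a := fun hqa => hqx ((Nat.dvd_add_left hqa).1 (hxa ▸ dvd_mul_right q n))
      have := lt_of_mem_image_union_Ici_of_not_dvd hx hqx
      have := lt_of_mem_image_union_Ici_of_not_dvd ha hqa
      nlinarith
    obtain ⟨y, rfl⟩ := hqx
    obtain ⟨b, rfl⟩ : q ∣ a :=
      (Nat.dvd_add_right (dvd_mul_right q y)).1 (hxa ▸ dvd_mul_right q n)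
    refine ⟨y, ⟨mem_of_mul_mem_image_union_Ici hq hT hx, b,
      mem_of_mul_mem_image_union_Ici hq hT ha, ?_⟩, rfl⟩
    exact Nat.eq_of_mul_eq_mul_left hq (by rw [mul_add, hxa])
  · rintro ⟨y, ⟨hy, b, hb, rfl⟩, rfl⟩
    exact ⟨Or.inl ⟨y, hy, rfl⟩, q * b, Or.inl ⟨b, hb, rfl⟩, (mul_add q y b).symm⟩

lemma count_image_union_Ici [DecidablePred (· ∈ T)]
    [DecidablePred (· ∈ (q * ·) '' T ∪ Ici (q * d))] (hq : 0 < q) :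
    Nat.count (· ∈ (q * ·) '' T ∪ Ici (q * d)) (q * d) = Nat.count (· ∈ T) d := by
  rw [Nat.count_eq_card_filter_range, Nat.count_eq_card_filter_range]
  refine Eq.trans ?_ (Finset.card_image_of_injective _ (mul_right_injective₀ hq.ne'))
  congr 1
  ext x
  simp only [Finset.mem_filter, Finset.mem_range, Finset.mem_image, mem_union, mem_image, mem_Ici]
  constructor
  · rintro ⟨hxd, ⟨y, hy, rfl⟩ | hx⟩
    · exact ⟨y, ⟨Nat.lt_of_mul_lt_mul_left hxd, hy⟩, rfl⟩
    · omega
  · rintro ⟨y, ⟨hyd, hy⟩, rfl⟩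
    exact ⟨Nat.mul_lt_mul_of_pos_left hyd hq, Or.inl ⟨y, hy, rfl⟩⟩

end Scaling

section GarciaStichtenoth

variable {q : ℕ}

lemma GSsemigroup_add_two (q k : ℕ) :
    GSsemigroup q (k + 2) = (q * ·) '' GSsemigroup q (k + 1) ∪ Ici (gsC q (k + 2)) :=
  rfl

lemma Ici_gsC_subset_GSsemigroup (q : ℕ) : ∀ m, Ici (gsC q m) ⊆ GSsemigroup q m
  | 0 => subset_univ _
  | 1 => subset_univ _
  | _ + 2 => subset_union_right

lemma infinite_GSsemigroup (q m : ℕ) : (GSsemigroup q m).Infinite :=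
  (Ici_infinite (gsC q m)).mono (Ici_gsC_subset_GSsemigroup q m)

lemma gsC_add_two (q k : ℕ) : gsC q (k + 2) = q * (q ^ (k + 1) - q ^ ((k + 1) / 2)) := by
  rw [gsC, Nat.mul_sub, ← pow_succ', ← pow_succ']
  congr 2
  omega

lemma gsC_add_one_le (hq : 0 < q) (k : ℕ) : gsC q (k + 1) ≤ q ^ (k + 1) - q ^ ((k + 1) / 2) :=
  Nat.sub_le_sub_left (Nat.pow_le_pow_right hq (by omega)) _

lemma gsG_le_gsC (q m : ℕ) : gsG q m ≤ gsC q m := by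
  rw [gsG, gsC]
  calc (q ^ ((m + 1) / 2) - 1) * (q ^ (m / 2) - 1)
      ≤ q ^ ((m + 1) / 2) * (q ^ (m / 2) - 1) := Nat.mul_le_mul_right _ (Nat.sub_le _ _)
    _ = q ^ m - q ^ ((m + 1) / 2) := by rw [Nat.mul_sub, mul_one, ← pow_add]; congr 2; omega

/-- The gaps of `Λ^{k+2}` are the numbers below `c_{k+2}` outside `q Λ^{k+1}`. -/
lemma gsG_add_two_add (hq : 0 < q) (k : ℕ) :
    gsG q (k + 2) + (q ^ (k + 1) - q ^ ((k + 1) / 2)) = gsC q (k + 2) + gsG q (k + 1) := by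
  rw [gsC_add_two]
  set A := q ^ ((k + 1) / 2)
  set B := q ^ ((k + 2) / 2)
  have hA : 1 ≤ A := Nat.one_le_pow _ _ hq
  have hB : 1 ≤ B := Nat.one_le_pow _ _ hq
  have hqA : 1 ≤ q * A := Nat.mul_pos hq hA
  have hAB : q ^ (k + 1) = A * B := by rw [← pow_add]; congr 1; omega
  have hG2 : gsG q (k + 2) = (q * A - 1) * (B - 1) := by
    rw [gsG, ← pow_succ']; congr 3; omega
  have hG1 : gsG q (k + 1) = (B - 1) * (A - 1) := rfl
  rw [hG2, hG1, hAB]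
  have : A ≤ A * B := Nat.le_mul_of_pos_right _ hB
  zify [hA, hB, hqA, this]
  ring

open Classical in
lemma count_GSsemigroup_gsC_add_gsG (hq : 0 < q) (k : ℕ) :
    Nat.count (· ∈ GSsemigroup q (k + 1)) (gsC q (k + 1)) + gsG q (k + 1) = gsC q (k + 1) := by
  induction k with
  | zero => simp [gsC, gsG]
  | succ k ih =>
    show Nat.count (· ∈ GSsemigroup q (k + 2)) (gsC q (k + 2)) + gsG q (k + 2) = gsC q (k + 2)
    have hcount := Nat.count_eq_count_add_sub (p := (· ∈ GSsemigroup q (k + 1)))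
      (fun _ h => Ici_gsC_subset_GSsemigroup q _ h) (gsC_add_one_le hq k)
    have hscale : Nat.count (· ∈ GSsemigroup q (k + 2)) (gsC q (k + 2)) =
        Nat.count (· ∈ GSsemigroup q (k + 1)) (q ^ (k + 1) - q ^ ((k + 1) / 2)) := by
      rw [GSsemigroup_add_two, gsC_add_two]
      convert count_image_union_Ici hq
    rw [hscale, hcount]
    have := gsG_add_two_add hq k
    have := gsC_add_one_le hq k
    omega

open Classical in
lemma gsEnum_sub_gsG (hq : 0 < q) {m n : ℕ} (hm : 1 ≤ m) (hn : gsC q m ≤ n) :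
    gsEnum q m (n - gsG q m) = n := by
  obtain ⟨k, rfl⟩ : ∃ k, m = k + 1 := ⟨m - 1, by omega⟩
  have hcount := Nat.count_eq_count_add_sub (p := (· ∈ GSsemigroup q (k + 1)))
    (fun _ h => Ici_gsC_subset_GSsemigroup q _ h) hn
  have := count_GSsemigroup_gsC_add_gsG hq k
  have : n - gsG q (k + 1) = Nat.count (· ∈ GSsemigroup q (k + 1)) n := by omega
  rw [gsEnum, this]
  exact Nat.nth_count (Ici_gsC_subset_GSsemigroup q _ hn)

lemma gsNu_eq_ncard_summandsIn (q m i : ℕ) :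
    gsNu q m i = (summandsIn (GSsemigroup q m) (gsEnum q m i)).ncard :=
  ncard_setOf_nth_add_eq_nth (infinite_GSsemigroup q m) i

end GarciaStichtenoth

/-- for `c_m - g_m < i ≤ 2c_m - g_m` with `q ∣ (i + g_m)`,
`ν^m_i = ν^{m-1}_{(i+g_m)/q - g_{m-1}}`. -/
theorem stmt16 (q : ℕ) (hq : 2 ≤ q) (m : ℕ) (hm : 2 ≤ m) (i : ℕ)
    (h1 : gsC q m - gsG q m < i) (h2 : i ≤ 2 * gsC q m - gsG q m)
    (h3 : q ∣ (i + gsG q m)) :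
    gsNu q m i = gsNu q (m - 1) ((i + gsG q m) / q - gsG q (m - 1)) := by
  obtain ⟨k, rfl⟩ : ∃ k, m = k + 2 := ⟨m - 2, by omega⟩
  obtain ⟨n, hn⟩ := h3
  have hq0 : 0 < q := by omega
  set d := q ^ (k + 1) - q ^ ((k + 1) / 2)
  have hc : gsC q (k + 2) = q * d := gsC_add_two q k
  have hgc := gsG_le_gsC q (k + 2)
  have hdn : d ≤ n := Nat.le_of_mul_le_mul_left (by omega) hq0
  have hn2d : n ≤ 2 * d := Nat.le_of_mul_le_mul_left (by rw [mul_left_comm]; omega) hq0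
  have hEnum : gsEnum q (k + 2) i = q * n := by
    rw [← hn, ← gsEnum_sub_gsG hq0 (by omega) (by omega : gsC q (k + 2) ≤ i + gsG q (k + 2))]
    congr 1; omega
  have hEnum' : gsEnum q (k + 1) (n - gsG q (k + 1)) = n :=
    gsEnum_sub_gsG hq0 (by omega) ((gsC_add_one_le hq0 k).trans hdn)
  rw [hn, Nat.mul_div_cancel_left n hq0, show k + 2 - 1 = k + 1 from rfl,
    gsNu_eq_ncard_summandsIn, gsNu_eq_ncard_summandsIn, hEnum, hEnum', GSsemigroup_add_two, hc,
    summandsIn_image_union_Ici hq0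
      ((Ici_subset_Ici.2 (gsC_add_one_le hq0 k)).trans (Ici_gsC_subset_GSsemigroup q _)) hn2d]
  exact ncard_image_of_injective _ (mul_right_injective₀ hq0.ne')
end
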